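/- Let ε > 0, α > 0, k > 0, z > 0, V ≥ 0, u ≥ 0, and suppose S* ≥ 0 satisfies the first-order optimality condition u = D(V, S*), where D(V, S) = ε·erfi(S/√(4·α·(V + z + k·S))) − (ε·k·√α/(2·√(V + z + k·S)))·exp(S²/(4·α·(V + z + k·S))). Then S* ≤ 4·α·k·p² + √(4·α·(V + z))·p, where p = 1 + √(log(2·u/ε + 1)). -/

import Mathlib

/-!
With `W = V + z + k S*`, put `t = S* / √(4αW)` and `c = k√α / (2√W)`; the optimality condition
reads `u / ε = erfi t - c exp (t²)`, and `4tc = kS*/W ≤ 1`. Comparing `exp (u²)` with `(u/t) exp (u²)`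
on `[0, t]` gives `2t·erfi t ≥ exp (t²) - 1`, while `exp (2t - 1) ≥ 2t` gives
`exp (t²) ≥ 2t·exp ((t-1)²)`; together they force `exp ((t-1)²) ≤ 2u/ε + 1` once `t ≥ 1`, i.e.
`t ≤ p`. Finally `S*² = t²·4αW = (t√(4α(V+z)))² + 4αkt²·S*`, and the positive root of this quadratic
is at most `4αkt² + √(4α(V+z))·t`.
-/

/-- The imaginary error function, `erfi x = ∫ u in 0..x, exp (u²)`
(the conventional erfi scaled by `√π / 2`). -/
noncomputable def erfi (x : ℝ) : ℝ := ∫ u in (0:ℝ)..x, Real.exp (u ^ 2)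

/-- `D(V, S)`, the partial derivative in `S` of the shifted potential
`Φ(V, S) = φ(V + z + k·S, S)`. -/
noncomputable def Dfun (ε α k z V S : ℝ) : ℝ :=
  ε * erfi (S / Real.sqrt (4 * α * (V + z + k * S))) -
    ε * k * Real.sqrt α / (2 * Real.sqrt (V + z + k * S)) *
      Real.exp (S ^ 2 / (4 * α * (V + z + k * S)))

open Real

lemma integral_two_mul_mul_exp_sq (a b : ℝ) :
    ∫ u in a..b, 2 * u * exp (u ^ 2) = exp (b ^ 2) - exp (a ^ 2) := by
  refine intervalIntegral.integral_eq_sub_of_hasDerivAt (f := fun y => exp (y ^ 2)) (fun x _ => ?_)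
    ((by fun_prop : Continuous fun u : ℝ => 2 * u * exp (u ^ 2)).intervalIntegrable _ _)
  refine (hasDerivAt_pow 2 x).exp.congr_deriv ?_
  push_cast
  ring

lemma exp_sq_sub_one_le_two_mul_mul_erfi {t : ℝ} (ht : 0 ≤ t) :
    exp (t ^ 2) - 1 ≤ 2 * t * erfi t := by
  rw [erfi, ← intervalIntegral.integral_const_mul]
  calc exp (t ^ 2) - 1 = ∫ u in (0:ℝ)..t, 2 * u * exp (u ^ 2) := by
        rw [integral_two_mul_mul_exp_sq]; simp
    _ ≤ _ := ?_
  refine intervalIntegral.integral_mono_on ht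
    ((by fun_prop : Continuous fun u : ℝ => 2 * u * exp (u ^ 2)).intervalIntegrable _ _)
    ((by fun_prop : Continuous fun u : ℝ => 2 * t * exp (u ^ 2)).intervalIntegrable _ _)
    fun u hu => ?_
  have := exp_pos (u ^ 2)
  nlinarith [hu.2]

lemma two_mul_mul_exp_sub_one_sq_le (t : ℝ) : 2 * t * exp ((t - 1) ^ 2) ≤ exp (t ^ 2) := by
  have hsplit : exp (t ^ 2) = exp (2 * t - 1) * exp ((t - 1) ^ 2) := by
    rw [← exp_add]; ring_nf
  rw [hsplit]
  gcongr
  linarith [add_one_le_exp (2 * t - 1)]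

lemma exp_sub_one_sq_le_two_mul_erfi_sub_add_one {t c : ℝ} (ht : 1 ≤ t) (hc : 4 * t * c ≤ 1) :
    exp ((t - 1) ^ 2) ≤ 2 * (erfi t - c * exp (t ^ 2)) + 1 := by
  have hE := exp_pos (t ^ 2)
  have hcE : 4 * t * c * exp (t ^ 2) ≤ exp (t ^ 2) := by nlinarith
  refine le_of_mul_le_mul_left ?_ (zero_lt_one.trans_le ht)
  linarith [exp_sq_sub_one_le_two_mul_mul_erfi (zero_le_one.trans ht),
    two_mul_mul_exp_sub_one_sq_le t]

lemma le_sqrt_log_of_exp_sq_le {x y : ℝ} (h : exp (x ^ 2) ≤ y) : x ≤ √(log y) := by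
  have hx : x ^ 2 ≤ log y := by
    rwa [le_log_iff_exp_le ((exp_pos _).trans_le h)]
  exact (le_abs_self x).trans (abs_le_sqrt hx)

lemma le_one_add_sqrt_log_erfi_sub {t c : ℝ} (hc : 4 * t * c ≤ 1) :
    t ≤ 1 + √(log (2 * (erfi t - c * exp (t ^ 2)) + 1)) := by
  rcases le_or_gt t 1 with ht | ht
  · linarith [sqrt_nonneg (log (2 * (erfi t - c * exp (t ^ 2)) + 1))]
  · linarith [le_sqrt_log_of_exp_sq_le (exp_sub_one_sq_le_two_mul_erfi_sub_add_one ht.le hc)]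

lemma le_add_of_sq_le_sq_add_mul {x b m : ℝ} (hb : 0 ≤ b) (hm : 0 ≤ m)
    (h : x ^ 2 ≤ b ^ 2 + m * x) : x ≤ m + b := by
  nlinarith

lemma four_mul_div_sqrt_mul_div_sqrt {α W : ℝ} (hα : 0 < α) (hW : 0 < W) (k S : ℝ) :
    4 * (S / √(4 * α * W)) * (k * √α / (2 * √W)) = k * S / W := by
  have h2 : √(4 * α * W) = 2 * √α * √W := by
    rw [sqrt_mul' _ hW.le, sqrt_mul zero_le_four, show (4:ℝ) = 2 ^ 2 by norm_num,
      sqrt_sq zero_le_two]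
  have := sqrt_pos.2 hα
  have := sqrt_pos.2 hW
  rw [h2]
  field_simp
  rw [sq_sqrt hW.le]
  ring

lemma Dfun_eq {ε α k z V S : ℝ} (hα : 0 ≤ α) (hW : 0 ≤ V + z + k * S) :
    Dfun ε α k z V S = ε * (erfi (S / √(4 * α * (V + z + k * S))) -
      k * √α / (2 * √(V + z + k * S)) * exp ((S / √(4 * α * (V + z + k * S))) ^ 2)) := by
  rw [Dfun, div_pow, sq_sqrt (by positivity)]
  ring

theorem optimality_point_bound_general (ε α k z V u Sstar : ℝ)
    (hε : 0 < ε) (hα : 0 < α) (hk : 0 < k) (hz : 0 < z)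
    (hV : 0 ≤ V) (hSstar : 0 ≤ Sstar)
    (hopt : u = Dfun ε α k z V Sstar) :
    Sstar ≤ 4 * α * k * (1 + Real.sqrt (Real.log (2 * u / ε + 1))) ^ 2 +
      Real.sqrt (4 * α * (V + z)) * (1 + Real.sqrt (Real.log (2 * u / ε + 1))) := by
  have hW : 0 < V + z + k * Sstar := by positivity
  rw [Dfun_eq hα.le hW.le] at hopt
  set W := V + z + k * Sstar
  set t := Sstar / √(4 * α * W)
  set c := k * √α / (2 * √W)
  have hc : 4 * t * c ≤ 1 := by
    rw [four_mul_div_sqrt_mul_div_sqrt hα hW, div_le_one hW]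
    linarith
  have ht : t ≤ 1 + √(log (2 * u / ε + 1)) := by
    rw [hopt, mul_div_assoc, mul_div_cancel_left₀ _ hε.ne']
    exact le_one_add_sqrt_log_erfi_sub hc
  have hS : Sstar ^ 2 = (√(4 * α * (V + z)) * t) ^ 2 + 4 * α * k * t ^ 2 * Sstar := by
    have hSt : Sstar = t * √(4 * α * W) := by
      rw [div_mul_cancel₀ _ (by positivity)]
    rw [mul_pow, sq_sqrt (by positivity)]
    nth_rw 1 [hSt]
    rw [mul_pow, sq_sqrt (by positivity)]
    ring
  calc Sstar ≤ 4 * α * k * t ^ 2 + √(4 * α * (V + z)) * t :=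
        le_add_of_sq_le_sq_add_mul (by positivity) (by positivity) hS.le
    _ ≤ _ := by gcongr

/-- Any `S* ≥ 0` satisfying the first-order optimality condition `u = D(V, S*)`
is bounded by `4αkp² + √(4α(V + z))·p`, where `p = 1 + √(log(2u/ε + 1))`. -/
theorem optimality_point_bound (ε α k z V u Sstar : ℝ)
    (hε : 0 < ε) (hα : 0 < α) (hk : 0 < k) (hz : 0 < z)
    (hV : 0 ≤ V) (hu : 0 ≤ u) (hSstar : 0 ≤ Sstar)
    (hopt : u = Dfun ε α k z V Sstar) :
    Sstar ≤ 4 * α * k * (1 + Real.sqrt (Real.log (2 * u / ε + 1))) ^ 2 +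
      Real.sqrt (4 * α * (V + z)) * (1 + Real.sqrt (Real.log (2 * u / ε + 1))) :=
  optimality_point_bound_general ε α k z V u Sstar hε hα hk hz hV hSstar hopt
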